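/- Let k = p₁^{α₁} ⋯ p_r^{α_r} be the prime factorization of k ≥ 2, and let n ≥ 1. Then 𝔰((ℤ/kℤ)^n) < k · ( 𝔰(𝔽_{p₁}^n)/(p₁ − 1) + ⋯ + 𝔰(𝔽_{p_r}^n)/(p_r − 1) ). -/

import Mathlib

/-!
Write `s q` for `𝔰((ℤ/qℤ)ⁿ)`. The classical product argument gives
`s (a * b) ≤ a * (s b - 1) + s a`: from a long sequence in `(ℤ/abℤ)ⁿ` remove, one after the
other, `s b` disjoint blocks of length `a` whose sums vanish mod `a`, i.e. equal `a • w`; the EGZ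
property mod `b` applied to the `w`'s selects `b` blocks whose union has length `ab` and sum `0`.
Hence `g q = (s q - 1) / q` satisfies `g (a * b) ≤ g a + g b` and
`g (p ^ (e + 1)) ≤ g (p ^ e) + (s p - 1) / p ^ (e + 1)`, so `g (p ^ e) ≤ (s p - 1) / (p - 1)` and
`g k ≤ ∑ (s p - 1) / (p - 1)` over the primes `p ∣ k`. The inequality becomes strict because
`k * ∑ 1 / (p - 1) > 1`.
-/

/-- The Erdős–Ginzburg–Ziv constant of an abelian group `G`: the smallest `k` such that
every multiset of elements of `G` of cardinality `k` contains a sub-multiset of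
cardinality `exp(G)` summing to zero. -/
noncomputable def EGZ (G : Type*) [AddCommMonoid G] : ℕ :=
  sInf {k | ∀ S : Multiset G, Multiset.card S = k →
    ∃ T ≤ S, Multiset.card T = AddMonoid.exponent G ∧ T.sum = 0}

open Multiset

theorem Multiset.exists_le_card_eq {α : Type*} {s : Multiset α} {m : ℕ} (h : m ≤ card s) :
    ∃ t ≤ s, card t = m := by
  induction s using Quotient.inductionOn with
  | h l => exact ⟨l.take m, (List.take_sublist m l).subperm, by simpa using h⟩

theorem Multiset.exists_le_map_eq {α β : Type*} {f : α → β} {s : Multiset α} {t : Multiset β}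
    (h : t ≤ s.map f) : ∃ u ≤ s, u.map f = t := by
  induction s using Quotient.inductionOn with
  | h l =>
  induction t using Quotient.inductionOn with
  | h l₁ =>
  obtain ⟨l₂, hperm, hsub⟩ := coe_le.1 h
  obtain ⟨l', hl', rfl⟩ := List.sublist_map_iff.1 hsub
  exact ⟨l', hl'.subperm, Quotient.sound hperm⟩

theorem Multiset.join_le_join {α : Type*} {s t : Multiset (Multiset α)} (h : s ≤ t) :
    s.join ≤ t.join := by
  obtain ⟨u, rfl⟩ := le_iff_exists_add.1 h
  simp

theorem Multiset.exists_blocks_join_le {α : Type*} {P : Multiset α → Prop} {a s : ℕ}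
    (hP : ∀ S : Multiset α, s ≤ card S → ∃ B ≤ S, card B = a ∧ P B) (j : ℕ) {S : Multiset α}
    (hS : a * j + s ≤ card S) :
    ∃ L : Multiset (Multiset α), card L = j + 1 ∧ L.join ≤ S ∧ ∀ B ∈ L, card B = a ∧ P B := by
  classical
  induction j generalizing S with
  | zero =>
    obtain ⟨B, hBS, hB⟩ := hP S (by simpa using hS)
    exact ⟨{B}, rfl, by simpa using hBS, by simpa using hB⟩
  | succ j ih =>
    obtain ⟨B, hBS, hBa, hPB⟩ := hP S (by nlinarith)
    obtain ⟨L, hL, hLS, hLP⟩ := ih (S := S - B) (by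
      rw [card_sub hBS, hBa]
      have := card_le_card hBS
      rw [mul_add] at hS
      omega)
    refine ⟨B ::ₘ L, by rw [card_cons, hL], ?_, ?_⟩
    · rw [join_cons]
      exact (add_le_add_right hLS B).trans_eq (add_tsub_cancel_of_le hBS)
    · simpa [hBa, hPB] using hLP

def ZeroSumProperty (G : Type*) [AddCommMonoid G] (m k : ℕ) : Prop :=
  ∀ S : Multiset G, card S = k → ∃ T ≤ S, card T = m ∧ T.sum = 0

section ZeroSumProperty

variable {G : Type*} [AddCommMonoid G] {m k : ℕ}

theorem ZeroSumProperty.le (h : ZeroSumProperty G m k) : m ≤ k := by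
  obtain ⟨T, hT, hTm, -⟩ := h (replicate k 0) (card_replicate k 0)
  simpa [hTm] using card_le_card hT

theorem ZeroSumProperty.exists_le_map_sum_eq_zero (h : ZeroSumProperty G m k) {ι : Type*}
    (f : ι → G) {W : Multiset ι} (hW : k ≤ card W) :
    ∃ U ≤ W, card U = m ∧ (U.map f).sum = 0 := by
  obtain ⟨W₀, hW₀, hW₀k⟩ := exists_le_card_eq hW
  obtain ⟨T, hT, hTm, hT0⟩ := h (W₀.map f) (by rw [card_map, hW₀k])
  obtain ⟨U, hU, rfl⟩ := exists_le_map_eq hT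
  exact ⟨U, hU.trans hW₀, by rwa [card_map] at hTm, hT0⟩

theorem zeroSumProperty_card_mul_pred_add_one [Fintype G] (hG : ∀ g : G, m • g = 0) :
    ZeroSumProperty G m (Fintype.card G * (m - 1) + 1) := by
  classical
  intro S hS
  obtain ⟨g, hg⟩ : ∃ g, m ≤ S.count g := by
    by_contra! hlt
    have : card S ≤ Fintype.card G * (m - 1) :=
      calc card S = ∑ g ∈ S.toFinset, S.count g := (toFinset_sum_count_eq S).symm
        _ ≤ ∑ _g ∈ S.toFinset, (m - 1) := Finset.sum_le_sum fun g _ => by have := hlt g; omega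
        _ ≤ Fintype.card G * (m - 1) := by
          rw [Finset.sum_const, smul_eq_mul]
          exact Nat.mul_le_mul_right _ S.toFinset.card_le_univ
    omega
  exact ⟨replicate m g, le_count_iff_replicate_le.1 hg, card_replicate m g,
    by rw [sum_replicate, hG]⟩

theorem zeroSumProperty_EGZ [Fintype G] :
    ZeroSumProperty G (AddMonoid.exponent G) (EGZ G) :=
  Nat.sInf_mem (s := {k | ZeroSumProperty G (AddMonoid.exponent G) k})
    ⟨_, zeroSumProperty_card_mul_pred_add_one AddMonoid.exponent_nsmul_eq_zero⟩

theorem EGZ_le (h : ZeroSumProperty G (AddMonoid.exponent G) k) : EGZ G ≤ k :=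
  Nat.sInf_le h

theorem ZeroSumProperty.mul {A B : Type*} [AddCommMonoid A] [AddCommMonoid B] {a b sA j : ℕ}
    (φ : G →+ A) (χ : G →+ B) (hφ : ∀ x, φ x = 0 → ∃ y, x = a • y)
    (hχ : ∀ x, χ x = 0 → ∃ y, x = b • y) (hG : ∀ x : G, (a * b) • x = 0)
    (hA : ZeroSumProperty A a sA) (hB : ZeroSumProperty B b (j + 1)) :
    ZeroSumProperty G (a * b) (a * j + sA) := by
  intro S hS
  have hblock : ∀ S : Multiset G, sA ≤ card S → ∃ T ≤ S, card T = a ∧ ∃ w, T.sum = a • w := by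
    intro S hS
    obtain ⟨T, hTS, hTa, hT0⟩ := hA.exists_le_map_sum_eq_zero φ hS
    exact ⟨T, hTS, hTa, hφ _ (by rw [map_multiset_sum, hT0])⟩
  obtain ⟨L, hLcard, hLS, hL⟩ := exists_blocks_join_le hblock j hS.ge
  choose! w hw using fun T hT => (hL T hT).2
  obtain ⟨Q, hQL, hQb, hQ0⟩ := hB.exists_le_map_sum_eq_zero (χ ∘ w) hLcard.ge
  have hQ : ∀ T ∈ Q, card T = a ∧ T.sum = a • w T :=
    fun T hT => ⟨(hL T (mem_of_le hQL hT)).1, hw T (mem_of_le hQL hT)⟩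
  obtain ⟨v, hv⟩ := hχ (Q.map w).sum (by rw [map_multiset_sum, map_map, hQ0])
  refine ⟨Q.join, (join_le_join hQL).trans hLS, ?_, ?_⟩
  · rw [card_join, map_congr rfl fun T hT => (hQ T hT).1, map_const', sum_replicate, hQb,
      smul_eq_mul, mul_comm]
  · rw [sum_join, map_congr rfl fun T hT => (hQ T hT).2, sum_map_nsmul, hv, smul_smul, hG]

end ZeroSumProperty

section ZModPi

variable {n : ℕ}

theorem exponent_zmod_pi (hn : 0 < n) (q : ℕ) : AddMonoid.exponent (Fin n → ZMod q) = q := by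
  rw [AddMonoid.exponent_pi]
  simp only [ZMod.exponent]
  exact Nat.dvd_antisymm (Finset.lcm_dvd fun _ _ => dvd_rfl)
    (Finset.dvd_lcm (Finset.mem_univ ⟨0, hn⟩))

theorem exists_eq_nsmul_of_compLeft_castHom_eq_zero {ι : Type*} {d N : ℕ} (hd : d ∣ N)
    {x : ι → ZMod N} (hx : (ZMod.castHom hd (ZMod d)).toAddMonoidHom.compLeft ι x = 0) :
    ∃ y, x = d • y := by
  have : ∀ i, ∃ y : ZMod N, x i = d * y := by
    intro i
    obtain ⟨z, hz⟩ := ZMod.intCast_surjective (x i)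
    have hzd : (z : ZMod d) = 0 := by simpa [← hz] using congrFun hx i
    obtain ⟨c, rfl⟩ := (ZMod.intCast_zmod_eq_zero_iff_dvd z d).1 hzd
    exact ⟨c, by rw [← hz]; push_cast; rfl⟩
  choose y hy using this
  exact ⟨y, funext fun i => by rw [hy i, Pi.smul_apply, nsmul_eq_mul]⟩

theorem le_EGZ_zmod_pi (hn : 0 < n) (q : ℕ) [NeZero q] : q ≤ EGZ (Fin n → ZMod q) := by
  simpa [exponent_zmod_pi hn] using (zeroSumProperty_EGZ (G := Fin n → ZMod q)).le

theorem EGZ_zmod_pi_one_le : EGZ (Fin n → ZMod 1) ≤ 1 := by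
  refine EGZ_le ?_
  simpa using zeroSumProperty_card_mul_pred_add_one (G := Fin n → ZMod 1) (m := 1)
    (fun g => Subsingleton.elim _ _)

theorem EGZ_zmod_pi_mul_add_le (hn : 0 < n) (a b : ℕ) [NeZero a] [NeZero b] :
    EGZ (Fin n → ZMod (a * b)) + a ≤ a * EGZ (Fin n → ZMod b) + EGZ (Fin n → ZMod a) := by
  have hA := zeroSumProperty_EGZ (G := Fin n → ZMod a)
  have hB := zeroSumProperty_EGZ (G := Fin n → ZMod b)
  rw [exponent_zmod_pi hn] at hA hB
  obtain ⟨j, hj⟩ := Nat.exists_eq_add_one_of_ne_zero (Nat.pos_of_neZero b |>.trans_le hB.le).ne'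
  rw [hj] at hB ⊢
  have hAB := hA.mul
    ((ZMod.castHom (dvd_mul_right a b) (ZMod a)).toAddMonoidHom.compLeft (Fin n))
    ((ZMod.castHom (dvd_mul_left b a) (ZMod b)).toAddMonoidHom.compLeft (Fin n))
    (fun _ => exists_eq_nsmul_of_compLeft_castHom_eq_zero _)
    (fun _ => exists_eq_nsmul_of_compLeft_castHom_eq_zero _)
    (fun x => by simpa [exponent_zmod_pi hn] using AddMonoid.exponent_nsmul_eq_zero x) hB
  have := EGZ_le (G := Fin n → ZMod (a * b)) (by rwa [exponent_zmod_pi hn])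
  linarith

end ZModPi

section SubmultiplicativeBound

variable {f : ℕ → ℝ}

theorem div_mul_le_add_of_le_mul_add (hf₀ : ∀ a, 0 < a → 0 ≤ f a)
    (hf_mul : ∀ a b, 0 < a → 0 < b → f (a * b) ≤ a * f b + f a) {a b : ℕ} (ha : 0 < a)
    (hb : 0 < b) : f (a * b) / (a * b : ℕ) ≤ f a / a + f b / b := by
  have ha' : (0 : ℝ) < a := by exact_mod_cast ha
  have hb' : (1 : ℝ) ≤ b := by exact_mod_cast hb
  calc f (a * b) / (a * b : ℕ) ≤ (a * f b + f a) / (a * b) := by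
        push_cast
        exact div_le_div_of_nonneg_right (hf_mul a b ha hb) (by positivity)
    _ = f a / a / b + f b / b := by field_simp; ring
    _ ≤ f a / a + f b / b :=
        add_le_add_left (div_le_self (div_nonneg (hf₀ a ha) ha'.le) hb') _

theorem div_prod_le_sum_of_le_mul_add (hf₀ : ∀ a, 0 < a → 0 ≤ f a) (hf₁ : f 1 ≤ 0)
    (hf_mul : ∀ a b, 0 < a → 0 < b → f (a * b) ≤ a * f b + f a) {ι : Type*} (s : Finset ι)
    {h : ι → ℕ} (hh : ∀ i ∈ s, 0 < h i) :
    f (∏ i ∈ s, h i) / (∏ i ∈ s, h i : ℕ) ≤ ∑ i ∈ s, f (h i) / h i := by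
  induction s using Finset.cons_induction with
  | empty => simpa using hf₁
  | cons i s hi ih =>
    rw [Finset.prod_cons, Finset.sum_cons]
    have hs := (Finset.forall_mem_cons hi _).1 hh
    exact (div_mul_le_add_of_le_mul_add hf₀ hf_mul hs.1 (Finset.prod_pos hs.2)).trans
      (add_le_add_right (ih hs.2) _)

theorem div_pow_le_of_le_mul_add (hf₁ : f 1 ≤ 0)
    (hf_mul : ∀ a b, 0 < a → 0 < b → f (a * b) ≤ a * f b + f a) {p : ℕ} (hp : 1 < p) (e : ℕ) :
    f (p ^ e) / (p ^ e : ℕ) ≤ f p / (p - 1) * (1 - 1 / p ^ e) := by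
  have hp' : (1 : ℝ) < p := by exact_mod_cast hp
  induction e with
  | zero => simpa using hf₁
  | succ e ih =>
    have hpe : (0 : ℝ) < p ^ e := by positivity
    calc f (p ^ (e + 1)) / (p ^ (e + 1) : ℕ) ≤ (p * f (p ^ e) + f p) / (p ^ (e + 1)) := by
          have := hf_mul p (p ^ e) (by omega) (by positivity)
          rw [← pow_succ'] at this
          push_cast
          exact div_le_div_of_nonneg_right this (by positivity)
      _ = f (p ^ e) / (p ^ e : ℕ) + f p / p ^ (e + 1) := by
          push_cast
          field_simp
          ring
      _ ≤ f p / (p - 1) * (1 - 1 / p ^ e) + f p / p ^ (e + 1) := by gcongr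
      _ = f p / (p - 1) * (1 - 1 / p ^ (e + 1)) := by
          field_simp [(sub_pos.2 hp').ne']
          ring

theorem div_le_sum_primeFactors_of_le_mul_add (hf₀ : ∀ a, 0 < a → 0 ≤ f a) (hf₁ : f 1 ≤ 0)
    (hf_mul : ∀ a b, 0 < a → 0 < b → f (a * b) ≤ a * f b + f a) {k : ℕ} (hk : k ≠ 0) :
    f k / k ≤ ∑ p ∈ k.primeFactors, f p / (p - 1) := by
  have hprod : ∏ p ∈ k.primeFactors, p ^ k.factorization p = k :=
    Nat.prod_factorization_pow_eq_self hk
  calc f k / k = f (∏ p ∈ k.primeFactors, p ^ k.factorization p) /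
        (∏ p ∈ k.primeFactors, p ^ k.factorization p : ℕ) := by rw [hprod]
    _ ≤ ∑ p ∈ k.primeFactors, f (p ^ k.factorization p) / (p ^ k.factorization p : ℕ) :=
        div_prod_le_sum_of_le_mul_add hf₀ hf₁ hf_mul _ fun p hp =>
          pow_pos (Nat.prime_of_mem_primeFactors hp).pos _
    _ ≤ ∑ p ∈ k.primeFactors, f p / (p - 1) := by
        refine Finset.sum_le_sum fun p hp => ?_
        have hp := (Nat.prime_of_mem_primeFactors hp).one_lt
        have hp' : (1 : ℝ) < p := by exact_mod_cast hp
        refine (div_pow_le_of_le_mul_add hf₁ hf_mul hp _).trans (mul_le_of_le_one_right ?_ ?_)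
        · exact div_nonneg (hf₀ p (by omega)) (sub_pos.2 hp').le
        · have : (0 : ℝ) ≤ 1 / p ^ k.factorization p := by positivity
          linarith

theorem one_lt_mul_sum_primeFactors_inv {k : ℕ} (hk : 2 ≤ k) :
    1 < (k : ℝ) * ∑ p ∈ k.primeFactors, 1 / ((p : ℝ) - 1) := by
  have hq := Nat.minFac_prime (by omega : k ≠ 1)
  have hqk : (k.minFac : ℝ) ≤ k := by exact_mod_cast Nat.minFac_le (by omega)
  have hq1 : (1 : ℝ) < k.minFac := by exact_mod_cast hq.one_lt
  have hterm : 1 / ((k.minFac : ℝ) - 1) ≤ ∑ p ∈ k.primeFactors, 1 / ((p : ℝ) - 1) :=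
    Finset.single_le_sum (f := fun p : ℕ => 1 / ((p : ℝ) - 1))
      (fun p hp => by
        have : (1 : ℝ) < p := by exact_mod_cast (Nat.prime_of_mem_primeFactors hp).one_lt
        positivity)
      (Nat.mem_primeFactors.2 ⟨hq, Nat.minFac_dvd k, by omega⟩)
  calc (1 : ℝ) < k * (1 / ((k.minFac : ℝ) - 1)) := by
        rw [mul_one_div, one_lt_div (by linarith)]
        linarith
    _ ≤ _ := by gcongr

theorem lt_mul_sum_primeFactors_of_add_le_mul_add {s : ℕ → ℝ} (hs₀ : ∀ a, 0 < a → 1 ≤ s a)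
    (hs₁ : s 1 ≤ 1) (hs_mul : ∀ a b, 0 < a → 0 < b → s (a * b) + a ≤ a * s b + s a) {k : ℕ}
    (hk : 2 ≤ k) : s k < k * ∑ p ∈ k.primeFactors, s p / (p - 1) := by
  have hbound := div_le_sum_primeFactors_of_le_mul_add (f := fun q => s q - 1)
    (fun a ha => by linarith [hs₀ a ha]) (by linarith)
    (fun a b ha hb => by linarith [hs_mul a b ha hb]) (by omega : k ≠ 0)
  have hk' : (0 : ℝ) < k := by positivity
  calc s k = 1 + k * ((s k - 1) / k) := by field_simp; ring
    _ ≤ 1 + k * ∑ p ∈ k.primeFactors, (s p - 1) / (p - 1) := by gcongr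
    _ < k * ∑ p ∈ k.primeFactors, 1 / ((p : ℝ) - 1) +
        k * ∑ p ∈ k.primeFactors, (s p - 1) / (p - 1) := by
        linarith [one_lt_mul_sum_primeFactors_inv hk]
    _ = k * ∑ p ∈ k.primeFactors, s p / (p - 1) := by
        rw [← mul_add, ← Finset.sum_add_distrib]
        congr 1
        exact Finset.sum_congr rfl fun p _ => by ring

end SubmultiplicativeBound

theorem stmt_7 (k n : ℕ) (hk : 2 ≤ k) (hn : 1 ≤ n) :
    (EGZ (Fin n → ZMod k) : ℝ) <
      (k : ℝ) * ∑ p ∈ k.primeFactors, (EGZ (Fin n → ZMod p) : ℝ) / ((p : ℝ) - 1) := by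
  refine lt_mul_sum_primeFactors_of_add_le_mul_add (s := fun q => (EGZ (Fin n → ZMod q) : ℝ))
    (fun a ha => ?_) (by exact_mod_cast EGZ_zmod_pi_one_le) (fun a b ha hb => ?_) hk
  · have := NeZero.of_pos ha
    exact_mod_cast ha.trans_le (le_EGZ_zmod_pi hn a)
  · have := NeZero.of_pos ha
    have := NeZero.of_pos hb
    exact_mod_cast EGZ_zmod_pi_mul_add_le hn a b
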